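/- arXiv:2210.07872 — 2 statements merged into one kernel-verified Lean document; each statement's English description precedes it below -/
import Mathlib

section
/- Define f(k) = (∏_{j=2}^{d} (d(j-1)+4k)) / ((d-1)! · d^{d-1}) for integer d ≥ 2. Then for every real k > d/2, the derivative satisfies f'(k) ≥ 2(d-1) > 1. -/
/-!
Writing `g j = d(j-1) + 4k`, the derivative is `4 ∑ᵢ ∏_{j ≠ i} g j / ((d-1)! d^{d-1})`. Since `g` is
increasing and positive, each product `∏_{j ≠ i} g j` is at least the one omitting the largest
factor `g d`, and for `k > d/2` every factor satisfies `g j > d (j+1)`, so that product exceeds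
`d^{d-2} ∏_{j=2}^{d-1} (j+1) = d^{d-2} d!/2 = (d-1)! d^{d-1} / 2`. Hence each of the `d-1` summands
contributes at least `2`.
-/

open Finset
open scoped Nat

theorem hasDerivAt_prod_add_mul {𝕜 ι : Type*} [NontriviallyNormedField 𝕜] [DecidableEq ι]
    (s : Finset ι) (a : ι → 𝕜) (c x : 𝕜) :
    HasDerivAt (fun x => ∏ j ∈ s, (a j + c * x))
      (∑ i ∈ s, (∏ j ∈ s.erase i, (a j + c * x)) * c) x := by
  simpa only [smul_eq_mul] using HasDerivAt.fun_finsetProd fun i _ =>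
    (((hasDerivAt_id' x).const_mul c).const_add (a i)).congr_deriv (mul_one c)

theorem prod_erase_le_prod_erase {ι α : Type*} [DecidableEq ι] [CommSemiring α] [LinearOrder α]
    [IsStrictOrderedRing α] {s : Finset ι} {g : ι → α} (hg : ∀ j ∈ s, 0 < g j) {i m : ι}
    (hi : i ∈ s) (hm : m ∈ s) (him : g i ≤ g m) :
    ∏ j ∈ s.erase m, g j ≤ ∏ j ∈ s.erase i, g j := by
  have hPm : 0 ≤ ∏ j ∈ s.erase m, g j := prod_nonneg fun j hj => (hg j (mem_of_mem_erase hj)).le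
  refine le_of_mul_le_mul_left ?_ (hg i hi)
  calc g i * ∏ j ∈ s.erase m, g j ≤ g m * ∏ j ∈ s.erase m, g j :=
        mul_le_mul_of_nonneg_right him hPm
    _ = g i * ∏ j ∈ s.erase i, g j := by rw [mul_prod_erase s g hm, mul_prod_erase s g hi]

theorem two_mul_prod_Ico_two_add_one_eq_factorial {d : ℕ} (hd : 2 ≤ d) :
    2 * ∏ j ∈ Ico 2 d, (j + 1) = d ! := by
  rw [← prod_range_add_one_eq_factorial, ← prod_range_mul_prod_Ico _ hd]
  rfl

theorem factorial_mul_pow_le_two_mul_prod_erase {d : ℕ} (hd : 2 ≤ d) {k : ℝ} (hk : (d : ℝ) / 2 < k)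
    {i : ℕ} (hi : i ∈ Icc 2 d) :
    ((d - 1)! : ℝ) * (d : ℝ) ^ (d - 1)
      ≤ 2 * ∏ j ∈ (Icc 2 d).erase i, ((d : ℝ) * ((j : ℝ) - 1) + 4 * k) := by
  obtain ⟨n, rfl⟩ : ∃ n, d = n + 2 := ⟨d - 2, by omega⟩
  have hfac : (((n + 2)! : ℕ) : ℝ) = 2 * ∏ j ∈ Ico 2 (n + 2), ((j : ℝ) + 1) := by
    rw [← two_mul_prod_Ico_two_add_one_eq_factorial hd]
    push_cast
    rfl
  have hpos : ∀ j ∈ Icc 2 (n + 2), 0 < ((n + 2 : ℕ) : ℝ) * ((j : ℝ) - 1) + 4 * k := by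
    intro j hj
    have hj : (1 : ℝ) ≤ j - 1 := by
      have : (2 : ℝ) ≤ j := by exact_mod_cast (mem_Icc.mp hj).1
      linarith
    have : (0 : ℝ) < k := lt_of_le_of_lt (by positivity) hk
    nlinarith
  calc (((n + 2 - 1)! : ℕ) : ℝ) * ((n + 2 : ℕ) : ℝ) ^ (n + 2 - 1)
      = ((n + 2 : ℕ) : ℝ) ^ n * (((n + 2)! : ℕ) : ℝ) := by
        rw [show n + 2 - 1 = n + 1 by omega, Nat.factorial_succ (n + 1)]
        push_cast
        ring
    _ = 2 * ∏ j ∈ Ico 2 (n + 2), ((n + 2 : ℕ) : ℝ) * ((j : ℝ) + 1) := by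
        rw [hfac, prod_mul_distrib, prod_const, Nat.card_Ico, Nat.add_sub_cancel]
        ring
    _ ≤ 2 * ∏ j ∈ Ico 2 (n + 2), (((n + 2 : ℕ) : ℝ) * ((j : ℝ) - 1) + 4 * k) := by
        gcongr with j
        linarith
    _ ≤ 2 * ∏ j ∈ (Icc 2 (n + 2)).erase i, (((n + 2 : ℕ) : ℝ) * ((j : ℝ) - 1) + 4 * k) := by
        rw [← Icc_erase_right]
        gcongr 2 * ?_
        refine prod_erase_le_prod_erase hpos hi (right_mem_Icc.mpr hd) ?_
        have : (i : ℝ) ≤ (n + 2 : ℕ) := by exact_mod_cast (mem_Icc.mp hi).2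
        gcongr

/-- For `k > d/2` the derivative of
`f(k) = ∏_{j=2}^d (d(j-1)+4k) / ((d-1)! d^{d-1})` satisfies `f'(k) ≥ 2(d-1) > 1`. -/
theorem stmt4 (d : ℕ) (hd : 2 ≤ d) (k : ℝ) (hk : (d : ℝ) / 2 < k) :
    deriv (fun k : ℝ =>
        (∏ j ∈ Finset.Icc 2 d, ((d : ℝ) * ((j : ℝ) - 1) + 4 * k))
          / ((Nat.factorial (d - 1) : ℝ) * (d : ℝ) ^ (d - 1))) k
      ≥ 2 * ((d : ℝ) - 1) ∧ (1 : ℝ) < 2 * ((d : ℝ) - 1) := by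
  have hd' : (2 : ℝ) ≤ d := by exact_mod_cast hd
  refine ⟨?_, by linarith⟩
  set C : ℝ := ((d - 1)! : ℝ) * (d : ℝ) ^ (d - 1)
  have hC : 0 < C := by positivity
  have hcard : ((#(Icc 2 d) : ℕ) : ℝ) = d - 1 := by
    rw [Nat.card_Icc, Nat.cast_sub (by omega)]
    push_cast
    ring
  rw [((hasDerivAt_prod_add_mul (Icc 2 d) (fun j => (d : ℝ) * ((j : ℝ) - 1)) 4 k).div_const C).deriv,
    ge_iff_le, le_div_iff₀ hC]
  calc 2 * ((d : ℝ) - 1) * C = #(Icc 2 d) • (2 * C) := by rw [nsmul_eq_mul, hcard]; ring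
    _ ≤ _ := card_nsmul_le_sum _ _ _ fun i hi => by
        linarith [factorial_mul_pow_le_two_mul_prod_erase hd hk hi]
end

section
/- For every positive integer m and every n ≥ 2, the number of closed walks of length m starting and ending at a fixed vertex of the infinite n-regular tree, divided by n^m, equals 0 if m is odd, and equals (1/n^m) Σ_{j=1}^{m/2} C(m-j, m/2) · (j/(m-j)) · n^j (n-1)^{m/2-j} if m is even. -/
/-!
Reading a word from the right and cancelling equal adjacent letters brings it to an alternating
word, and by the normal form theorem for free products the word is trivial exactly when this
alternating word is empty. Sorting words by their first letter, the number `W m h` of words of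
length `m` that reduce to a fixed alternating word of length `h` obeys the random-walk recursion
`W (m+1) 0 = n W m 1`, `W (m+1) (h+1) = W m h + (n-1) W m (h+2)` of the distance to the root in the
`n`-regular tree. Kesten's formula is the case `h = 0` of an explicit solution of this recursion
built from ballot numbers, and checking it reduces to Pascal's rule.
-/

open Finset

namespace TreeWalks

section Reduction

variable {ι : Type*} [DecidableEq ι]

def push (a : ι) : List ι → List ι
  | [] => [a]
  | b :: t => if a = b then t else a :: b :: t

@[simp] lemma push_nil (a : ι) : push a [] = [a] := rfl

lemma push_cons (a b : ι) (t : List ι) : push a (b :: t) = if a = b then t else a :: b :: t := rfl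

def reduce (l : List ι) : List ι := l.foldr push []

@[simp] lemma reduce_nil : reduce ([] : List ι) = [] := rfl

@[simp] lemma reduce_cons (a : ι) (l : List ι) : reduce (a :: l) = push a (reduce l) := rfl

lemma isChain_push (a : ι) {s : List ι} (hs : s.IsChain (· ≠ ·)) :
    (push a s).IsChain (· ≠ ·) := by
  cases s with
  | nil => exact List.isChain_singleton a
  | cons b t =>
    rw [push_cons]
    split_ifs with hab
    · exact hs.tail
    · exact hs.cons_cons hab

lemma isChain_reduce (l : List ι) : (reduce l).IsChain (· ≠ ·) := by
  induction l with
  | nil => exact List.isChain_nil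
  | cons a l ih => exact isChain_push a ih

lemma push_eq_nil_iff {a : ι} {t : List ι} : push a t = [] ↔ t = [a] := by
  cases t with
  | nil => simp [push]
  | cons b t => rw [push_cons]; split_ifs <;> simp_all [eq_comm]

lemma push_eq_cons_iff {a c : ι} {s t : List ι} (ht : t.IsChain (· ≠ ·))
    (hs : (c :: s).IsChain (· ≠ ·)) :
    push a t = c :: s ↔ if a = c then t = s else t = a :: c :: s := by
  cases t with
  | nil => split_ifs <;> simp_all
  | cons b t => rw [push_cons]; grind

end Reduction

section Generators

variable {ι : Type*}

abbrev FreeProdZ2 (ι : Type*) := Monoid.CoprodI fun _ : ι => Multiplicative (ZMod 2)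

noncomputable def gen (i : ι) : FreeProdZ2 ι :=
  Monoid.CoprodI.of (i := i) (Multiplicative.ofAdd (1 : ZMod 2))

lemma gen_mul_self (i : ι) : gen i * gen i = 1 := by
  rw [gen, ← map_mul]
  exact map_one _

def reducedWord (s : List ι) (hs : s.IsChain (· ≠ ·)) :
    Monoid.CoprodI.Word fun _ : ι => Multiplicative (ZMod 2) where
  toList := s.map fun i => ⟨i, Multiplicative.ofAdd 1⟩
  ne_one := by simp
  chain_ne := by rwa [List.isChain_map]

lemma prod_reducedWord (s : List ι) (hs : s.IsChain (· ≠ ·)) :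
    (reducedWord s hs).prod = (s.map gen).prod := by
  simp only [Monoid.CoprodI.Word.prod, reducedWord, List.map_map]
  rfl

variable [DecidableEq ι]

lemma eq_nil_of_prod_map_gen_eq_one {s : List ι} (hs : s.IsChain (· ≠ ·))
    (h : (s.map gen).prod = 1) : s = [] := by
  have : reducedWord s hs = .empty := Monoid.CoprodI.Word.equiv.symm.injective <| by
    simpa [Monoid.CoprodI.Word.equiv, prod_reducedWord] using h
  simpa [reducedWord] using congrArg Monoid.CoprodI.Word.toList this

lemma prod_map_gen_push (a : ι) (s : List ι) :
    ((push a s).map gen).prod = gen a * (s.map gen).prod := by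
  cases s with
  | nil => simp
  | cons b t =>
    rw [push_cons]
    split_ifs with hab
    · simp [hab, ← mul_assoc, gen_mul_self]
    · simp

lemma prod_map_gen_reduce (l : List ι) : ((reduce l).map gen).prod = (l.map gen).prod := by
  induction l with
  | nil => rfl
  | cons a l ih => rw [reduce_cons, prod_map_gen_push, ih, List.map_cons, List.prod_cons]

lemma prod_map_gen_eq_one_iff (l : List ι) : (l.map gen).prod = 1 ↔ reduce l = [] := by
  rw [← prod_map_gen_reduce]
  exact ⟨eq_nil_of_prod_map_gen_eq_one (isChain_reduce l), fun h => by rw [h]; rfl⟩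

end Generators

section Counting

-- Walks of length `m` between two vertices at distance `h` of the `n`-regular tree.
def walkCount (n : ℕ) : ℕ → ℕ → ℕ
  | 0, h => if h = 0 then 1 else 0
  | m + 1, 0 => n * walkCount n m 1
  | m + 1, h + 1 => walkCount n m h + (n - 1) * walkCount n m (h + 2)

lemma card_filter_ofFn_succ {α : Type*} [Fintype α] (P : List α → Prop) [DecidablePred P]
    (m : ℕ) :
    #{w : Fin (m + 1) → α | P (List.ofFn w)} = ∑ a, #{w : Fin m → α | P (a :: List.ofFn w)} := by
  simp only [card_filter]
  rw [← (Fin.consEquiv fun _ => α).sum_comp, Fintype.sum_prod_type]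
  simp [Fin.consEquiv, List.ofFn_succ]

variable {α : Type*} [Fintype α] [DecidableEq α]

lemma sum_ite_eq_add_card_sub_one_nsmul {M : Type*} [AddCommMonoid M] (c : α) (x y : M) :
    ∑ a, (if a = c then x else y) = x + (Fintype.card α - 1) • y := by
  rw [← add_sum_erase _ _ (mem_univ c), if_pos rfl,
    sum_congr rfl fun a ha => if_neg (ne_of_mem_erase ha), sum_const,
    card_erase_of_mem (mem_univ c), card_univ]

lemma card_filter_reduce_eq (m : ℕ) {s : List α} (hs : s.IsChain (· ≠ ·)) :
    #{w : Fin m → α | reduce (List.ofFn w) = s} = walkCount (Fintype.card α) m s.length := by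
  induction m generalizing s with
  | zero => cases s <;> simp [walkCount]
  | succ m ih =>
    rw [card_filter_ofFn_succ (fun l => reduce l = s)]
    cases s with
    | nil =>
      simp only [reduce_cons, push_eq_nil_iff, ih (List.isChain_singleton _),
        List.length_singleton, sum_const, card_univ, smul_eq_mul]
      rfl
    | cons c s =>
      have hfibre : ∀ a, #{w : Fin m → α | reduce (a :: List.ofFn w) = c :: s} =
          if a = c then walkCount (Fintype.card α) m s.length
          else walkCount (Fintype.card α) m (s.length + 2) := by
        intro a
        simp only [reduce_cons, push_eq_cons_iff (isChain_reduce _) hs]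
        split_ifs with hac
        · exact ih hs.tail
        · exact ih (hs.cons_cons hac)
      rw [sum_congr rfl fun a _ => hfibre a, sum_ite_eq_add_card_sub_one_nsmul, smul_eq_mul]
      rfl

lemma card_prod_ofFn_gen_eq_one (m : ℕ) :
    Nat.card {w : Fin m → α // (List.ofFn fun i => gen (w i)).prod = 1} =
      walkCount (Fintype.card α) m 0 := by
  have hclosed (w : Fin m → α) :
      (List.ofFn fun i => gen (w i)).prod = 1 ↔ reduce (List.ofFn w) = [] := by
    rw [← prod_map_gen_eq_one_iff, List.map_ofFn]
    rfl
  rw [Nat.card_congr (Equiv.subtypeEquivRight hclosed), Nat.card_eq_fintype_card,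
    Fintype.card_subtype]
  exact card_filter_reduce_eq m List.isChain_nil

end Counting

section ClosedForm

lemma walkCount_eq_zero {n m h : ℕ} (hmh : m < h ∨ Odd (m + h)) : walkCount n m h = 0 := by
  rw [Nat.odd_iff] at hmh
  induction m generalizing h with
  | zero => cases h <;> simp_all [walkCount]
  | succ m ih =>
    cases h with
    | zero => rw [walkCount, ih (by omega), mul_zero]
    | succ h => rw [walkCount, ih (h := h) (by omega), ih (h := h + 2) (by omega), mul_zero,
      add_zero]

lemma walkCount_self (n h : ℕ) : walkCount n h h = 1 := by
  induction h with
  | zero => rfl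
  | succ h ih => simp [walkCount, ih, walkCount_eq_zero]

-- The number of lattice paths from `0` to `h` with `k` down-steps that return to `0` exactly
-- `j` times; in `kestenSum` each of the `j` excursions from the start leaves in `n` directions and
-- each of the other `k - j` undone steps in `n - 1`.
noncomputable def ballot (h k j : ℕ) : ℝ :=
  ((h + 2 * k - j).choose (h + k) : ℝ) * ((h + j : ℕ) / (((h + 2 * k : ℕ) : ℝ) - j))

noncomputable def kestenSum (n h k : ℕ) : ℝ :=
  ∑ j ∈ range (k + 1), ballot h k j * (n : ℝ) ^ j * ((n : ℝ) - 1) ^ (k - j)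

lemma ballot_self {h k : ℕ} (hhk : 0 < h + k) : ballot h k k = 1 := by
  rw [ballot, show h + 2 * k - k = h + k by omega, Nat.choose_self, Nat.cast_one, one_mul,
    show ((h + 2 * k : ℕ) : ℝ) - k = (h + k : ℕ) by push_cast; ring]
  exact div_self (by exact_mod_cast hhk.ne')

lemma ballot_zero_zero (k : ℕ) : ballot 0 k 0 = 0 := by
  simp [ballot]

lemma ballot_zero_succ (k j : ℕ) : ballot 0 (k + 1) (j + 1) = ballot 1 k j := by
  rw [ballot, ballot, show 0 + 2 * (k + 1) - (j + 1) = 1 + 2 * k - j by omega,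
    show 0 + (k + 1) = 1 + k by omega]
  push_cast
  ring

lemma ballot_succ_left {h k j : ℕ} (hj : j ≤ k) :
    ballot (h + 1) (k + 1) j = ballot h (k + 1) j + ballot (h + 2) k j := by
  set N := h + 2 * (k + 1) - j with hN
  set a := N.choose (h + k + 1)
  set b := N.choose (h + k + 2)
  have hNR : (N : ℝ) = h + 2 * k + 2 - j := by
    rw [hN, Nat.cast_sub (by omega)]
    push_cast
    ring
  have hN0 : (N : ℝ) ≠ 0 := by exact_mod_cast (show N ≠ 0 by omega)
  have hN1 : (N : ℝ) + 1 ≠ 0 := by positivity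
  have ratio : (b : ℝ) * (h + k + 2) = a * (k + 1 - j) := by
    have := Nat.choose_succ_right_eq N (h + k + 1)
    rw [show N - (h + k + 1) = k + 1 - j by omega] at this
    have hR := congrArg (Nat.cast : ℕ → ℝ) this
    push_cast [Nat.cast_sub (by omega : j ≤ k + 1)] at hR
    linear_combination hR
  rw [ballot, ballot, ballot, show h + 1 + 2 * (k + 1) - j = N + 1 by omega,
    show h + 1 + (k + 1) = h + k + 1 + 1 by omega, Nat.choose_succ_succ',
    show h + 2 + 2 * k - j = N by omega, show h + (k + 1) = h + k + 1 by omega,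
    show h + 2 + k = h + k + 2 by omega,
    show ((h + 1 + 2 * (k + 1) : ℕ) : ℝ) - j = N + 1 by push_cast [hNR]; ring,
    show ((h + 2 * (k + 1) : ℕ) : ℝ) - j = N by push_cast [hNR]; ring,
    show ((h + 2 + 2 * k : ℕ) : ℝ) - j = N by push_cast [hNR]; ring]
  push_cast
  field_simp
  linear_combination (-2 : ℝ) * ratio + (a - b : ℝ) * hNR

lemma kestenSum_zero_succ (n k : ℕ) : kestenSum n 0 (k + 1) = n * kestenSum n 1 k := by
  rw [kestenSum, sum_range_succ', ballot_zero_zero, kestenSum, mul_sum]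
  simp only [ballot_zero_succ, zero_mul, add_zero, Nat.add_sub_add_right, pow_succ]
  exact sum_congr rfl fun j _ => by ring

lemma kestenSum_succ_succ (n h k : ℕ) :
    kestenSum n (h + 1) (k + 1) = kestenSum n h (k + 1) + (n - 1) * kestenSum n (h + 2) k := by
  rw [kestenSum, kestenSum, kestenSum, sum_range_succ, sum_range_succ (n := k + 1),
    ballot_self (by omega), ballot_self (by omega), mul_sum, add_right_comm, ← sum_add_distrib]
  congr 1
  refine sum_congr rfl fun j hj => ?_
  rw [ballot_succ_left (Nat.lt_succ_iff.mp (mem_range.mp hj)),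
    Nat.sub_add_comm (Nat.lt_succ_iff.mp (mem_range.mp hj)), pow_succ]
  ring

lemma kestenSum_zero_right (n : ℕ) {h : ℕ} (hh : 0 < h) : kestenSum n h 0 = 1 := by
  simp [kestenSum, ballot_self (h := h) (k := 0) hh]

lemma walkCount_eq_kestenSum {n : ℕ} (hn : 1 ≤ n) (h k : ℕ) (hhk : 0 < h + k) :
    (walkCount n (h + 2 * k) h : ℝ) = kestenSum n h k := by
  induction k generalizing h with
  | zero =>
    rw [mul_zero, add_zero, walkCount_self, kestenSum_zero_right n (by omega), Nat.cast_one]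
  | succ k ihk =>
    induction h with
    | zero =>
      rw [show 0 + 2 * (k + 1) = (1 + 2 * k) + 1 by ring, walkCount, Nat.cast_mul,
        ihk 1 (by omega), kestenSum_zero_succ]
    | succ h ihh =>
      rw [show h + 1 + 2 * (k + 1) = (h + 2 * (k + 1)) + 1 by ring, walkCount, Nat.cast_add,
        Nat.cast_mul, Nat.cast_sub hn, ihh (by omega),
        show h + 2 * (k + 1) = (h + 2) + 2 * k by ring,
        ihk (h + 2) (by omega), kestenSum_succ_succ, Nat.cast_one]

lemma kestenSum_zero_eq_sum_Icc (n k : ℕ) :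
    kestenSum n 0 k = ∑ j ∈ Icc 1 k, ((2 * k - j).choose k : ℝ) * ((j : ℝ) / ((2 * k : ℕ) - j))
      * (n : ℝ) ^ j * ((n : ℝ) - 1) ^ (k - j) := by
  rw [kestenSum, ← sum_subset (s₁ := Icc 1 k) (fun j hj => by grind)
    fun j hj hj' => by rw [show j = 0 by grind, ballot_zero_zero]; ring]
  refine sum_congr rfl fun j _ => ?_
  simp [ballot]

end ClosedForm

end TreeWalks

open TreeWalks in
/-- Closed walks of length `m` on the infinite `n`-regular tree, realized as the
Cayley graph of the free product of `n` copies of `ℤ/2`: words `U₁...U_m` in the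
`n` order-two generators multiplying to the identity.  Their number divided by
`n^m` is `0` for odd `m`, and given by Kesten's formula for even `m`. -/
theorem stmt7 (n m : ℕ) (hn : 2 ≤ n) (hm : 1 ≤ m) :
    ((Nat.card {w : Fin m → Fin n //
        (List.ofFn (fun i : Fin m =>
          (Monoid.CoprodI.of (M := fun _ : Fin n => Multiplicative (ZMod 2))
            (i := w i) (Multiplicative.ofAdd (1 : ZMod 2))))).prod = 1} : ℝ)
      / (n : ℝ) ^ m)
    = if Odd m then 0 else
        (1 / (n : ℝ) ^ m) * ∑ j ∈ Finset.Icc 1 (m / 2),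
          (Nat.choose (m - j) (m / 2) : ℝ) * ((j : ℝ) / ((m : ℝ) - j))
            * (n : ℝ) ^ j * ((n : ℝ) - 1) ^ (m / 2 - j) := by
  have hcard := card_prod_ofFn_gen_eq_one (α := Fin n) m
  rw [Fintype.card_fin] at hcard
  unfold gen at hcard
  rw [hcard]
  split_ifs with hodd
  · rw [walkCount_eq_zero (Or.inr (by simpa using hodd)), Nat.cast_zero, zero_div]
  · obtain ⟨k, rfl⟩ : ∃ k, m = 2 * k := (Nat.not_odd_iff_even.mp hodd).two_dvd
    rw [← zero_add (2 * k), walkCount_eq_kestenSum (by omega) 0 k (by omega), zero_add,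
      kestenSum_zero_eq_sum_Icc, Nat.mul_div_cancel_left k two_pos, one_div, inv_mul_eq_div]
end
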